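/- ν-almost surely, the Schrödinger operator H_β = −P + 2β is nonnegative on finitely supported functions: for every f : V → ℝ with finite support, Σ_{i∈V} 2β_i f(i)² − 2 Σ_{{i,j}∈E} W_{i,j} f(i) f(j) ≥ 0 (each edge counted once). In particular the spectrum of H_β is contained in [0,∞). -/

import Mathlib

open MeasureTheory

namespace VRJPStmt

variable {V : Type*} [DecidableEq V]

/-- Right-hand side of the Laplace transform of the random potential `β`, for a finite
window `U`: each non-oriented edge inside `U` is counted once (hence the factor `1/2` in
front of the sum over ordered pairs), and each boundary edge `{i,j}` with `i ∈ U`, `j ∉ U`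
is counted once. -/
noncomputable def laplaceRHS (G : SimpleGraph V) [DecidableRel G.Adj]
    [∀ v : V, Fintype (G.neighborSet v)] (W : V → V → ℝ) (U : Finset V) (lam : V → ℝ) : ℝ :=
  Real.exp
    (-(1/2) * ∑ i ∈ U, ∑ j ∈ U,
        (if G.Adj i j then W i j * (Real.sqrt ((1 + lam i) * (1 + lam j)) - 1) else 0)
      - ∑ i ∈ U, ∑ j ∈ G.neighborFinset i \ U, W i j * (Real.sqrt (1 + lam i) - 1))
    * ∏ i ∈ U, (1 + lam i) ^ (-(1/2) : ℝ)

/-- `ν` is a probability measure on `(0,∞)^V` whose canonical field `(β_i)` has the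
prescribed finite-dimensional Laplace transforms. -/
def IsBetaField (G : SimpleGraph V) [DecidableRel G.Adj]
    [∀ v : V, Fintype (G.neighborSet v)] (W : V → V → ℝ)
    (ν : Measure (V → ℝ)) : Prop :=
  IsProbabilityMeasure ν ∧ (∀ᵐ β ∂ν, ∀ i, 0 < β i) ∧
    ∀ U : Finset V, ∀ lam : V → ℝ, (∀ i, 0 ≤ lam i) →
      ∫ β, Real.exp (-(∑ i ∈ U, lam i * β i)) ∂ν = laplaceRHS G W U lam

/-- Weight `W_σ = Π W_{σ_k, σ_{k+1}}` of a path given as a list of vertices. -/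
noncomputable def wWeight (W : V → V → ℝ) (l : List V) : ℝ :=
  ((l.zip l.tail).map (fun p => W p.1 p.2)).prod

/-- `(2β)_σ = Π_{k=0}^m 2 β_{σ_k}`. -/
noncomputable def twoBetaFull (β : V → ℝ) (l : List V) : ℝ :=
  (l.map (fun k => 2 * β k)).prod

/-- `(2β)^−_σ = Π_{k=0}^{m−1} 2 β_{σ_k}` (all vertices but the last one). -/
noncomputable def twoBetaMinus (β : V → ℝ) (l : List V) : ℝ :=
  (l.dropLast.map (fun k => 2 * β k)).prod

/-- `l` is a path from `i` to `j` for the adjacency relation `A`. -/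
def IsWalkList (A : V → V → Prop) (i j : V) (l : List V) : Prop :=
  l ≠ [] ∧ l.head? = some i ∧ l.getLast? = some j ∧ l.Chain' A

/-- Paths from `i` to `j` staying in the set `S`. -/
def PathsIn (G : SimpleGraph V) (S : Set V) (i j : V) (l : List V) : Prop :=
  IsWalkList G.Adj i j l ∧ ∀ x ∈ l, x ∈ S

/-- Paths starting at `i`, staying in `S` except for the last vertex, which is outside `S`. -/
def ExitPaths (G : SimpleGraph V) (S : Set V) (i : V) (l : List V) : Prop :=
  l ≠ [] ∧ l.head? = some i ∧ l.Chain' G.Adj ∧ (∀ x ∈ l.dropLast, x ∈ S) ∧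
    (∀ x, l.getLast? = some x → x ∉ S)

/-- `Ĝ^{(n)}(i,j) = Σ_{σ ∈ 𝒫^{(n)}_{i,j}} W_σ/(2β)_σ` if `i,j ∈ V_n`, `0` otherwise. -/
noncomputable def GhatN (G : SimpleGraph V) (W : V → V → ℝ) (Vseq : ℕ → Finset V)
    (n : ℕ) (i j : V) (β : V → ℝ) : ℝ :=
  if i ∈ Vseq n ∧ j ∈ Vseq n then
    ∑' l : {l : List V // PathsIn G (↑(Vseq n)) i j l}, wWeight W ↑l / twoBetaFull β ↑l
  else 0

/-- `ψ^{(n)}(i) = Σ_{σ ∈ 𝒫̄^{(n)}_i} W_σ/(2β)^−_σ` if `i ∈ V_n`, `1` otherwise. -/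
noncomputable def psiN (G : SimpleGraph V) (W : V → V → ℝ) (Vseq : ℕ → Finset V)
    (n : ℕ) (i : V) (β : V → ℝ) : ℝ :=
  if i ∈ Vseq n then
    ∑' l : {l : List V // ExitPaths G (↑(Vseq n)) i l}, wWeight W ↑l / twoBetaMinus β ↑l
  else 1

/-- The σ-algebra `ℱ_n` generated by the coordinates `(β_i)_{i ∈ V_n}`. -/
def FiltN (Vseq : ℕ → Finset V) (n : ℕ) : MeasurableSpace (V → ℝ) :=
  MeasurableSpace.comap (fun β (i : {x : V // x ∈ Vseq n}) => β ↑i) inferInstance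

/-- `(V_n)` is an increasing exhausting sequence of finite connected subsets of the graph. -/
def IsExhaustion (G : SimpleGraph V) (Vseq : ℕ → Finset V) : Prop :=
  (∀ n, Vseq n ⊆ Vseq (n+1)) ∧ (∀ n, (G.induce (↑(Vseq n) : Set V)).Connected) ∧
    ∀ x : V, ∃ n, x ∈ Vseq n



/-!
Fix `f` and a finite window `S` containing its support. Evaluating the Laplace transform at
`λ = s f²` and using `√((1 + λ_i)(1 + λ_j)) ≥ s |f(i)| |f(j)|` gives
`E[exp(-s Σ_{i∈S} f(i)² β_i)] ≤ exp(-s A / 2 + C)` with `A = Σ_{i,j∈S, i∼j} W_{i,j} |f(i)| |f(j)|`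
and `C` independent of `s`. Letting `s → ∞` in the Chernoff bound yields
`Σ_i 2 β_i f(i)² ≥ A` a.s., and `A` dominates the edge term. A connected locally finite graph is
countable, so this holds simultaneously for all rational `f` on all finite windows, and by
continuity of the quadratic form for every `f`.
-/

open ProbabilityTheory Filter Topology Real

theorem _root_.SimpleGraph.Connected.countable {G : SimpleGraph V}
    [∀ v, Fintype (G.neighborSet v)] (hG : G.Connected) : Countable V := by
  obtain ⟨v₀⟩ := hG.nonempty
  let grow : Finset V → Finset V := fun S => S ∪ S.biUnion fun v => G.neighborFinset v
  have hreach : ∀ {v u : V} (p : G.Walk v u) (S : Finset V), v ∈ S → u ∈ grow^[p.length] S := by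
    intro v u p
    induction p with
    | nil => exact fun S hv => hv
    | cons h p ih =>
      intro S hv
      rw [SimpleGraph.Walk.length_cons, Function.iterate_succ_apply]
      exact ih _ (Finset.mem_union_right _
        (Finset.mem_biUnion.2 ⟨_, hv, (G.mem_neighborFinset _ _).2 h⟩))
  refine Set.countable_univ_iff.1 ((Set.countable_iUnion fun n =>
    (grow^[n] {v₀}).countable_toSet).mono fun u _ => ?_)
  obtain ⟨p⟩ := hG v₀ u
  exact Set.mem_iUnion.2 ⟨_, hreach p _ (Finset.mem_singleton_self _)⟩

theorem ae_le_of_mgf_neg_le {Ω : Type*} [MeasurableSpace Ω] {μ : Measure Ω} [IsFiniteMeasure μ]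
    {X : Ω → ℝ} {a C : ℝ} (hint : ∀ s, 0 ≤ s → Integrable (fun ω => exp (-s * X ω)) μ)
    (hmgf : ∀ s, 0 ≤ s → mgf X μ (-s) ≤ exp (-s * a + C)) :
    ∀ᵐ ω ∂μ, a ≤ X ω := by
  have hlower : ∀ c < a, ∀ᵐ ω ∂μ, c < X ω := by
    intro c hc
    have hbound : ∀ n : ℕ, μ.real {ω | X ω ≤ c} ≤ exp (n * (c - a) + C) := fun n => by
      have hn : (0 : ℝ) ≤ n := n.cast_nonneg
      calc μ.real {ω | X ω ≤ c} ≤ exp (- -n * c) * mgf X μ (-n) :=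
            measure_le_le_exp_mul_mgf c (by linarith) (hint n hn)
        _ ≤ exp (- -n * c) * exp (-n * a + C) := by gcongr; exact hmgf n hn
        _ = exp (n * (c - a) + C) := by rw [← exp_add]; ring_nf
    have hlim : Tendsto (fun n : ℕ => exp (n * (c - a) + C)) atTop (𝓝 0) :=
      tendsto_exp_atBot.comp (tendsto_atBot_add_const_right _ _
        (tendsto_natCast_atTop_atTop.atTop_mul_const_of_neg (by linarith)))
    have hzero : μ.real {ω | X ω ≤ c} = 0 :=
      le_antisymm (ge_of_tendsto' hlim hbound) measureReal_nonneg
    rw [measureReal_eq_zero_iff] at hzero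
    simpa [ae_iff] using hzero
  filter_upwards [ae_all_iff.2 fun n : ℕ => hlower (a - 1 / (n + 1)) (by simp; positivity)]
    with ω hω
  by_contra! hlt
  obtain ⟨n, hn⟩ := exists_nat_one_div_lt (sub_pos.2 hlt)
  linarith [hω n]

theorem mul_abs_mul_abs_le_sqrt {s : ℝ} (hs : 0 ≤ s) (a b : ℝ) :
    s * (|a| * |b|) ≤ √((1 + s * a ^ 2) * (1 + s * b ^ 2)) := by
  apply Real.le_sqrt_of_sq_le
  have hsq : (s * (|a| * |b|)) ^ 2 = (s * a ^ 2) * (s * b ^ 2) := by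
    rw [mul_pow, mul_pow, sq_abs, sq_abs]; ring
  nlinarith [mul_nonneg hs (sq_nonneg a), mul_nonneg hs (sq_nonneg b)]

section SchrodingerForm

variable {V : Type*} (G : SimpleGraph V) [DecidableRel G.Adj] (W : V → V → ℝ)

/-- `⟨f, H_β f⟩` when `f` is supported in `S`. -/
noncomputable def schrodingerForm (β : V → ℝ) (S : Finset V) (f : V → ℝ) : ℝ :=
  ∑ i ∈ S, 2 * β i * f i ^ 2 - ∑ i ∈ S, ∑ j ∈ S, if G.Adj i j then W i j * f i * f j else 0

theorem continuous_schrodingerForm (β : V → ℝ) (S : Finset V) :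
    Continuous (schrodingerForm G W β S) := by
  refine (continuous_finsetSum _ fun i _ => by fun_prop).sub
    (continuous_finsetSum _ fun i _ => continuous_finsetSum _ fun j _ => ?_)
  split_ifs <;> fun_prop

theorem schrodingerForm_congr (β : V → ℝ) (S : Finset V) {f g : V → ℝ}
    (h : ∀ i ∈ S, f i = g i) : schrodingerForm G W β S f = schrodingerForm G W β S g := by
  unfold schrodingerForm
  congr 1
  · exact Finset.sum_congr rfl fun i hi => by rw [h i hi]
  · exact Finset.sum_congr rfl fun i hi => Finset.sum_congr rfl fun j hj => by rw [h i hi, h j hj]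

theorem finsum_sub_finsum_eq_schrodingerForm [∀ v, Fintype (G.neighborSet v)] (β f : V → ℝ)
    {S : Finset V} (hS : Function.support f ⊆ S) :
    (∑ᶠ i, 2 * β i * f i ^ 2) - ∑ᶠ i, ∑ j ∈ G.neighborFinset i, W i j * f i * f j =
      schrodingerForm G W β S f := by
  have hf : ∀ i ∉ S, f i = 0 := fun i hi => Function.notMem_support.1 fun h => hi (hS h)
  rw [finsum_eq_sum_of_support_subset _ (s := S) (Function.support_subset_iff'.2 fun i hi => by
      simp [hf i hi]),
    finsum_eq_sum_of_support_subset _ (s := S) (Function.support_subset_iff'.2 fun i hi => by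
      simp [hf i hi])]
  refine congrArg _ (Finset.sum_congr rfl fun i _ => ?_)
  rw [← Finset.sum_filter]
  refine (Finset.sum_subset (fun j hj => ?_) fun j _ hj => ?_).symm
  · exact (G.mem_neighborFinset _ _).2 (Finset.mem_filter.1 hj).2
  · have hjS : j ∉ S := fun hjS =>
      hj (Finset.mem_filter.2 ⟨hjS, (G.mem_neighborFinset _ _).1 ‹_›⟩)
    simp [hf j hjS]

theorem schrodingerForm_nonneg_of_rat [DecidableEq V] {β : V → ℝ} {S : Finset V}
    (h : ∀ q : S → ℚ,
      0 ≤ schrodingerForm G W β S fun i => if hi : i ∈ S then (q ⟨i, hi⟩ : ℝ) else 0)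
    (f : V → ℝ) : 0 ≤ schrodingerForm G W β S f := by
  let extend : (S → ℝ) → V → ℝ := fun y i => if hi : i ∈ S then y ⟨i, hi⟩ else 0
  have hextend : Continuous extend := continuous_pi fun i => by
    by_cases hi : i ∈ S <;> simp only [extend, hi, dite_true, dite_false] <;> fun_prop
  have key := (DenseRange.piMap fun _ => Rat.denseRange_cast).induction_on
    (p := fun y => 0 ≤ schrodingerForm G W β S (extend y)) (fun i => f i)
    (isClosed_le continuous_const ((continuous_schrodingerForm G W β S).comp hextend)) h
  rwa [schrodingerForm_congr G W β S (g := f) fun i hi => by simp [extend, hi]] at key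

end SchrodingerForm

section LaplaceTransform

variable (G : SimpleGraph V) [DecidableRel G.Adj] [∀ v, Fintype (G.neighborSet v)]
  (W : V → V → ℝ)

theorem laplaceRHS_le (hWpos : ∀ i j, G.Adj i j → 0 < W i j) (S : Finset V) (f : V → ℝ)
    {s : ℝ} (hs : 0 ≤ s) :
    laplaceRHS G W S (fun i => s * f i ^ 2) ≤
      exp (-s * ((∑ i ∈ S, ∑ j ∈ S, if G.Adj i j then W i j * (|f i| * |f j|) else 0) / 2) +
        (∑ i ∈ S, ∑ j ∈ S, if G.Adj i j then W i j else 0) / 2) := by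
  have hlam : ∀ i, 0 ≤ s * f i ^ 2 := fun i => mul_nonneg hs (sq_nonneg _)
  have hprod : ∏ i ∈ S, (1 + s * f i ^ 2) ^ (-(1 / 2) : ℝ) ≤ 1 :=
    Finset.prod_le_one (fun i _ => by have := hlam i; positivity)
      fun i _ => Real.rpow_le_one_of_one_le_of_nonpos (by linarith [hlam i]) (by norm_num)
  have hboundary : 0 ≤ ∑ i ∈ S, ∑ j ∈ G.neighborFinset i \ S, W i j * (√(1 + s * f i ^ 2) - 1) :=
    Finset.sum_nonneg fun i _ => Finset.sum_nonneg fun j hj =>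
      mul_nonneg (hWpos i j ((G.mem_neighborFinset _ _).1 (Finset.mem_sdiff.1 hj).1)).le
        (sub_nonneg.2 (Real.one_le_sqrt.2 (by linarith [hlam i])))
  have hedge : s * (∑ i ∈ S, ∑ j ∈ S, if G.Adj i j then W i j * (|f i| * |f j|) else 0) -
      ∑ i ∈ S, ∑ j ∈ S, (if G.Adj i j then W i j else 0) ≤
      ∑ i ∈ S, ∑ j ∈ S,
        if G.Adj i j then W i j * (√((1 + s * f i ^ 2) * (1 + s * f j ^ 2)) - 1) else 0 := by
    simp only [Finset.mul_sum, ← Finset.sum_sub_distrib]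
    gcongr with i _ j _
    split_ifs with hij
    · nlinarith [hWpos i j hij, mul_abs_mul_abs_le_sqrt hs (f i) (f j)]
    · simp
  unfold laplaceRHS
  calc _ ≤ exp (-(1 / 2) * ∑ i ∈ S, ∑ j ∈ S,
          (if G.Adj i j then W i j * (√((1 + s * f i ^ 2) * (1 + s * f j ^ 2)) - 1) else 0)
        - ∑ i ∈ S, ∑ j ∈ G.neighborFinset i \ S, W i j * (√(1 + s * f i ^ 2) - 1)) :=
        mul_le_of_le_one_right (exp_pos _).le hprod
    _ ≤ _ := exp_le_exp.2 (by linarith)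

theorem ae_schrodingerForm_nonneg (hWpos : ∀ i j, G.Adj i j → 0 < W i j)
    {ν : Measure (V → ℝ)} (hν : IsBetaField G W ν) (S : Finset V) (f : V → ℝ) :
    ∀ᵐ β ∂ν, 0 ≤ schrodingerForm G W β S f := by
  obtain ⟨hprob, hpos, hlaplace⟩ := hν
  let X : (V → ℝ) → ℝ := fun β => ∑ i ∈ S, f i ^ 2 * β i
  have hX_nonneg : ∀ᵐ β ∂ν, 0 ≤ X β := hpos.mono fun β hβ =>
    Finset.sum_nonneg fun i _ => mul_nonneg (sq_nonneg _) (hβ i).le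
  have hint : ∀ s, 0 ≤ s → Integrable (fun β => exp (-s * X β)) ν := fun s hs =>
    (integrable_const 1).mono' (by fun_prop) (hX_nonneg.mono fun β hβ => by
      rw [Real.norm_eq_abs, abs_exp, exp_le_one_iff]; nlinarith)
  have hmgf : ∀ s, 0 ≤ s → mgf X ν (-s) = laplaceRHS G W S (fun i => s * f i ^ 2) :=
    fun s hs => by
      rw [← hlaplace S _ fun i => mul_nonneg hs (sq_nonneg _)]
      refine integral_congr_ae (ae_of_all _ fun β => ?_)
      simp only [X, Finset.mul_sum, ← Finset.sum_neg_distrib]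
      congr 1
      exact Finset.sum_congr rfl fun i _ => by ring
  filter_upwards [ae_le_of_mgf_neg_le hint fun s hs =>
    (hmgf s hs).le.trans (laplaceRHS_le G W hWpos S f hs)] with β hβ
  have hcross : (∑ i ∈ S, ∑ j ∈ S, if G.Adj i j then W i j * f i * f j else 0) ≤
      ∑ i ∈ S, ∑ j ∈ S, if G.Adj i j then W i j * (|f i| * |f j|) else 0 := by
    gcongr with i _ j _
    split_ifs with hij
    · rw [mul_assoc, ← abs_mul]
      exact mul_le_mul_of_nonneg_left (le_abs_self _) (hWpos i j hij).le
    · rfl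
  have hdiag : ∑ i ∈ S, 2 * β i * f i ^ 2 = 2 * X β := by
    simp only [X, Finset.mul_sum]
    exact Finset.sum_congr rfl fun i _ => by ring
  unfold schrodingerForm
  linarith

end LaplaceTransform

/-- `ν`-a.s. the Schrödinger operator `H_β = −P + 2β` is nonnegative on
finitely supported functions: for every finitely supported `f : V → ℝ`,
`Σ_i 2β_i f(i)² − 2 Σ_{{i,j}∈E} W_{i,j} f(i) f(j) ≥ 0` (each edge counted once, so the edge
term equals the sum over ordered adjacent pairs). -/
theorem stmt17 {V : Type*} [DecidableEq V] [Infinite V] (G : SimpleGraph V)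
    [DecidableRel G.Adj] [∀ v : V, Fintype (G.neighborSet v)] (hconn : G.Connected)
    (W : V → V → ℝ) (hWsymm : ∀ i j, W i j = W j i) (hWpos : ∀ i j, G.Adj i j → 0 < W i j)
    (ν : MeasureTheory.Measure (V → ℝ)) (hν : IsBetaField G W ν) :
    ∀ᵐ β ∂ν, ∀ f : V → ℝ, (Function.support f).Finite →
      0 ≤ (∑ᶠ i, 2 * β i * f i ^ 2)
          - ∑ᶠ i, ∑ j ∈ G.neighborFinset i, W i j * f i * f j := by
  have : Countable V := hconn.countable
  have hrat : ∀ᵐ β ∂ν, ∀ (S : Finset V) (q : S → ℚ),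
      0 ≤ schrodingerForm G W β S fun i => if hi : i ∈ S then (q ⟨i, hi⟩ : ℝ) else 0 := by
    simp only [ae_all_iff]
    exact fun S q => ae_schrodingerForm_nonneg G W hWpos hν S _
  filter_upwards [hrat] with β hβ f hf
  rw [finsum_sub_finsum_eq_schrodingerForm G W β f hf.coe_toFinset.ge]
  exact schrodingerForm_nonneg_of_rat G W (hβ _) f

end VRJPStmt
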